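/- Let X ∈ U(n, 3^s) be a balanced three-level lattice design with n ≥ 2, and map each entry to z_{ij} = (2 x_{ij} + 1)/6 ∈ {1/6, 1/2, 5/6}. Then WL2²(X) − a_2 = (2/n²)(23/18)^s ∑_{1 ≤ i < k ≤ n} (27/23)^{β(x_i, x_k)} ≥ ((n−1)(23+4f)/(23n)) (23/18)^s (27/23)^θ, where a_2 = (1/n)(3/2)^s − (4/3)^s, β̄ = s(n−3)/(3(n−1)), θ = ⌊β̄⌋ and f = β̄ − θ. -/

import Mathlib

open Finset

/-- The coincidence number β(x, w) = #{j : x_j = w_j} of two lattice points. -/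
def coincidence {s q : ℕ} (x w : Fin s → Fin q) : ℕ :=
  (univ.filter fun j => x j = w j).card

/-- A design `X ∈ U(n, q^s)` is balanced: `q ∣ n` and every level occurs exactly
`n / q` times in each column; here `q = 3`. -/
def IsBalanced {n s q : ℕ} (X : Fin n → Fin s → Fin q) : Prop :=
  q ∣ n ∧ ∀ (j : Fin s) (ℓ : Fin q),
    (univ.filter fun i => X i j = ℓ).card = n / q

/-- The index set of pairs 1 ≤ i < k ≤ n. -/
def pairs (n : ℕ) : Finset (Fin n × Fin n) := univ.filter fun p => p.1 < p.2

/-- The design points mapped to [0,1]: z_{ij} = (2 x_{ij} + 1)/6 ∈ {1/6, 1/2, 5/6}. -/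
noncomputable def zpt3 {n s : ℕ} (X : Fin n → Fin s → Fin 3) (i : Fin n) (j : Fin s) : ℝ :=
  (2 * ((X i j : ℕ) : ℝ) + 1) / 6

/-- The squared wrap-around L₂-discrepancy of the induced point set. -/
noncomputable def WL2sq {n s : ℕ} (X : Fin n → Fin s → Fin 3) : ℝ :=
  -(4 / 3 : ℝ) ^ s
    + 1 / (n : ℝ) ^ 2 * ∑ i, ∑ k, ∏ j,
        (3 / 2 - |zpt3 X i j - zpt3 X k j| * (1 - |zpt3 X i j - zpt3 X k j|))

/-! When two rows agree in a coordinate the wrap-around kernel factor there is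
`3/2 = (23/18)(27/23)`, otherwise it is `23/18`; so the kernel of rows `xᵢ, xₖ` is
`(23/18)ˢ (27/23)^β(xᵢ, xₖ)`, and the diagonal `i = k` together with `-(4/3)ˢ` is `a₂`.
For the bound, the convex sequence `t ↦ (27/23)ᵗ` lies above its secant through `θ, θ + 1`
at every integer, and balance fixes the mean of `β` over the `n(n-1)/2` pairs to be `β̄`. -/

theorem coincidence_comm {s q : ℕ} (x w : Fin s → Fin q) :
    coincidence x w = coincidence w x := by
  simp only [coincidence, eq_comm]

theorem coincidence_self {s q : ℕ} (x : Fin s → Fin q) : coincidence x x = s := by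
  simp [coincidence]

theorem prod_ite_eq_pow_coincidence {M : Type*} [CommMonoid M] {s q : ℕ}
    (x w : Fin s → Fin q) (c r : M) :
    ∏ j, (if x j = w j then c * r else c) = c ^ s * r ^ coincidence x w := by
  have hcompl : #(univ.filter fun j => ¬ x j = w j) = s - coincidence x w := by
    rw [filter_not, card_sdiff_of_subset (filter_subset _ _), card_univ, Fintype.card_fin]
    rfl
  have hle : coincidence x w ≤ s := (card_filter_le univ _).trans_eq (by simp)
  rw [prod_ite, prod_const, prod_const, hcompl, mul_pow, ← coincidence, mul_right_comm,
    pow_mul_pow_sub c hle]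

theorem sum_sum_eq_sum_diag_add_two_nsmul_sum_pairs {M : Type*} [AddCommMonoid M] {n : ℕ}
    (F : Fin n → Fin n → M) (hF : ∀ i k, F i k = F k i) :
    ∑ i, ∑ k, F i k = ∑ i, F i i + 2 • ∑ p ∈ pairs n, F p.1 p.2 := by
  have hdiag : ∑ p ∈ univ.filter (fun p : Fin n × Fin n => p.1 = p.2), F p.1 p.2
      = ∑ i, F i i := by
    rw [sum_filter, Fintype.sum_prod_type]
    simp
  have hlower : ∑ p ∈ univ.filter (fun p : Fin n × Fin n => p.2 < p.1), F p.1 p.2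
      = ∑ p ∈ pairs n, F p.1 p.2 :=
    sum_equiv (Equiv.prodComm _ _) (by simp [pairs]) fun p _ => hF _ _
  have hsplit : ∀ p : Fin n × Fin n, F p.1 p.2 = (if p.1 = p.2 then F p.1 p.2 else 0)
      + ((if p.1 < p.2 then F p.1 p.2 else 0) + if p.2 < p.1 then F p.1 p.2 else 0) := by
    intro p
    rcases lt_trichotomy p.1 p.2 with h | h | h
    · simp [h, h.ne, h.not_gt]
    · simp [h]
    · simp [h, h.ne', h.not_gt]
  rw [← Fintype.sum_prod_type', sum_congr rfl fun p _ => hsplit p, sum_add_distrib,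
    sum_add_distrib, ← sum_filter, ← sum_filter, ← sum_filter, hdiag, hlower, two_nsmul]
  rfl

theorem card_pairs_add (n : ℕ) : n + 2 * #(pairs n) = n * n := by
  have h := sum_sum_eq_sum_diag_add_two_nsmul_sum_pairs (n := n) (fun _ _ => 1) fun _ _ => rfl
  simp only [sum_const, card_univ, Fintype.card_fin, smul_eq_mul, mul_one] at h
  exact h.symm

theorem IsBalanced.sum_coincidence {n s q : ℕ} {X : Fin n → Fin s → Fin q}
    (hX : IsBalanced X) (i : Fin n) :
    ∑ k, coincidence (X i) (X k) = s * (n / q) := by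
  simp only [coincidence, card_filter]
  rw [sum_comm]
  have hcol : ∀ j, (∑ k, if X i j = X k j then 1 else 0) = n / q := fun j => by
    rw [← hX.2 j (X i j), card_filter]
    simp only [eq_comm]
  simp [hcol]

theorem IsBalanced.sum_pairs_coincidence {n s q : ℕ} {X : Fin n → Fin s → Fin q}
    (hX : IsBalanced X) :
    n * s + 2 * ∑ p ∈ pairs n, coincidence (X p.1) (X p.2) = n * (s * (n / q)) := by
  have h := sum_sum_eq_sum_diag_add_two_nsmul_sum_pairs (fun i k => coincidence (X i) (X k))
    fun i k => coincidence_comm _ _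
  simp only [hX.sum_coincidence, coincidence_self, sum_const, card_univ, Fintype.card_fin,
    smul_eq_mul] at h
  exact h.symm

theorem wrapKernel_zpt3 {n s : ℕ} (X : Fin n → Fin s → Fin 3) (i k : Fin n) (j : Fin s) :
    3 / 2 - |zpt3 X i j - zpt3 X k j| * (1 - |zpt3 X i j - zpt3 X k j|)
      = if X i j = X k j then (23 / 18 : ℝ) * (27 / 23) else 23 / 18 := by
  unfold zpt3
  generalize X i j = a
  generalize X k j = b
  fin_cases a <;> fin_cases b <;> norm_num [abs_of_nonneg, abs_of_nonpos]

theorem sum_sum_prod_wrapKernel_zpt3 {n s : ℕ} (X : Fin n → Fin s → Fin 3) :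
    ∑ i, ∑ k, ∏ j, (3 / 2 - |zpt3 X i j - zpt3 X k j| * (1 - |zpt3 X i j - zpt3 X k j|))
      = n * (3 / 2 : ℝ) ^ s + 2 * ((23 / 18 : ℝ) ^ s *
          ∑ p ∈ pairs n, (27 / 23 : ℝ) ^ coincidence (X p.1) (X p.2)) := by
  simp only [wrapKernel_zpt3, prod_ite_eq_pow_coincidence]
  rw [sum_sum_eq_sum_diag_add_two_nsmul_sum_pairs _ fun i k => by rw [coincidence_comm]]
  simp only [coincidence_self, ← mul_pow, sum_const, card_univ, Fintype.card_fin, nsmul_eq_mul,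
    mul_sum]
  norm_num

theorem pow_mul_one_add_sub_mul_sub_le_pow {r : ℝ} (hr : 0 < r) (b t : ℕ) :
    r ^ t * (1 + (r - 1) * ((b : ℝ) - t)) ≤ r ^ b := by
  rcases le_total t b with htb | hbt
  · obtain ⟨m, rfl⟩ := Nat.exists_eq_add_of_le htb
    have hbern : 1 + m * (r - 1) ≤ r ^ m := one_add_mul_sub_le_pow (by linarith) m
    rw [pow_add]
    push_cast
    nlinarith [pow_pos hr t]
  · obtain ⟨m, rfl⟩ := Nat.exists_eq_add_of_le hbt
    -- Bernoulli for `r⁻¹`, together with `r⁻¹ - 1 ≥ 1 - r`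
    have hbern : 1 + m * (r⁻¹ - 1) ≤ r⁻¹ ^ m :=
      one_add_mul_sub_le_pow (by linarith [inv_pos.2 hr]) m
    have hinv : 1 - r ≤ r⁻¹ - 1 := by
      rw [le_sub_iff_add_le, ← sub_nonneg]
      have : r⁻¹ - (1 - r + 1) = (r - 1) ^ 2 / r := by field_simp; ring
      rw [this]
      positivity
    have hkey : r ^ m * (1 - (r - 1) * m) ≤ 1 := by
      calc r ^ m * (1 - (r - 1) * m) ≤ r ^ m * r⁻¹ ^ m := by
            gcongr
            nlinarith [(m.cast_nonneg : (0 : ℝ) ≤ m)]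
        _ = 1 := by rw [← mul_pow, mul_inv_cancel₀ hr.ne', one_pow]
    calc r ^ (b + m) * (1 + (r - 1) * ((b : ℝ) - ↑(b + m)))
        = r ^ b * (r ^ m * (1 - (r - 1) * m)) := by push_cast; ring
      _ ≤ r ^ b := mul_le_of_le_one_right (pow_pos hr b).le hkey

theorem pow_mul_card_add_le_sum_pow {ι : Type*} {r : ℝ} (hr : 0 < r) (S : Finset ι)
    (b : ι → ℕ) (t : ℕ) :
    r ^ t * (#S + (r - 1) * (∑ i ∈ S, (b i : ℝ) - #S * t)) ≤ ∑ i ∈ S, r ^ b i := by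
  calc r ^ t * (#S + (r - 1) * (∑ i ∈ S, (b i : ℝ) - #S * t))
      = ∑ i ∈ S, r ^ t * (1 + (r - 1) * ((b i : ℝ) - t)) := by
        simp only [mul_add, mul_sub, sum_add_distrib, sum_sub_distrib, ← mul_sum, sum_const,
          nsmul_eq_mul]
        ring
    _ ≤ ∑ i ∈ S, r ^ b i := sum_le_sum fun i _ => pow_mul_one_add_sub_mul_sub_le_pow hr _ _

theorem WL2sq_identity_and_bound_three_level_general (n s : ℕ) (hn : 2 ≤ n)
    (X : Fin n → Fin s → Fin 3) (hX : IsBalanced X)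
    (a₂ : ℝ) (ha₂ : a₂ = 1 / (n : ℝ) * (3 / 2 : ℝ) ^ s - (4 / 3 : ℝ) ^ s)
    (βbar : ℝ) (hβbar : βbar = (s : ℝ) * ((n : ℝ) - 3) / (3 * ((n : ℝ) - 1)))
    (θ : ℕ)
    (f : ℝ) (hf : f = βbar - θ) :
    WL2sq X - a₂ = 2 / (n : ℝ) ^ 2 * (23 / 18 : ℝ) ^ s *
        ∑ p ∈ pairs n, (27 / 23 : ℝ) ^ coincidence (X p.1) (X p.2) ∧
      2 / (n : ℝ) ^ 2 * (23 / 18 : ℝ) ^ s *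
          ∑ p ∈ pairs n, (27 / 23 : ℝ) ^ coincidence (X p.1) (X p.2)
        ≥ ((n : ℝ) - 1) * (23 + 4 * f) / (23 * n) * (23 / 18 : ℝ) ^ s
            * (27 / 23 : ℝ) ^ θ := by
  have hn2 : (2 : ℝ) ≤ n := by exact_mod_cast hn
  have hn0 : (n : ℝ) ≠ 0 := by positivity
  have hn1 : (n : ℝ) - 1 ≠ 0 := by linarith
  have hcard : (#(pairs n) : ℝ) = n * (n - 1) / 2 := by
    have := congrArg (Nat.cast (R := ℝ)) (card_pairs_add n)
    push_cast at this
    linarith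
  have hsum : ∑ p ∈ pairs n, (coincidence (X p.1) (X p.2) : ℝ) = s * n * (n - 3) / 6 := by
    have := congrArg (Nat.cast (R := ℝ)) hX.sum_pairs_coincidence
    push_cast [Nat.cast_div hX.1 (by norm_num : (3 : ℝ) ≠ 0)] at this
    linarith
  refine ⟨by rw [WL2sq, sum_sum_prod_wrapKernel_zpt3, ha₂]; field_simp; ring, ?_⟩
  calc ((n : ℝ) - 1) * (23 + 4 * f) / (23 * n) * (23 / 18 : ℝ) ^ s * (27 / 23 : ℝ) ^ θ
      = 2 / (n : ℝ) ^ 2 * (23 / 18 : ℝ) ^ s * ((27 / 23 : ℝ) ^ θ * (#(pairs n)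
          + (27 / 23 - 1) * (∑ p ∈ pairs n, (coincidence (X p.1) (X p.2) : ℝ)
            - #(pairs n) * θ))) := by
        rw [hcard, hsum, hf, hβbar]
        field_simp
        ring
    _ ≤ _ := by gcongr; exact pow_mul_card_add_le_sum_pow (by norm_num) _ _ θ

/-- Corollary 1 (three-level, wrap-around L₂-discrepancy):
WL₂²(X) − a₂ = (2/n²)(23/18)ˢ ∑_{i<k} (27/23)^{β(x_i,x_k)}
             ≥ ((n−1)(23+4f)/(23n)) (23/18)ˢ (27/23)^θ. -/
theorem WL2sq_identity_and_bound_three_level (n s : ℕ) (hn : 2 ≤ n)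
    (X : Fin n → Fin s → Fin 3) (hX : IsBalanced X)
    (a₂ : ℝ) (ha₂ : a₂ = 1 / (n : ℝ) * (3 / 2 : ℝ) ^ s - (4 / 3 : ℝ) ^ s)
    (βbar : ℝ) (hβbar : βbar = (s : ℝ) * ((n : ℝ) - 3) / (3 * ((n : ℝ) - 1)))
    (θ : ℕ) (hθ : θ = ⌊βbar⌋₊)
    (f : ℝ) (hf : f = βbar - θ) :
    WL2sq X - a₂ = 2 / (n : ℝ) ^ 2 * (23 / 18 : ℝ) ^ s *
        ∑ p ∈ pairs n, (27 / 23 : ℝ) ^ coincidence (X p.1) (X p.2) ∧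
      2 / (n : ℝ) ^ 2 * (23 / 18 : ℝ) ^ s *
          ∑ p ∈ pairs n, (27 / 23 : ℝ) ^ coincidence (X p.1) (X p.2)
        ≥ ((n : ℝ) - 1) * (23 + 4 * f) / (23 * n) * (23 / 18 : ℝ) ^ s
            * (27 / 23 : ℝ) ^ θ :=
  WL2sq_identity_and_bound_three_level_general n s hn X hX a₂ ha₂ βbar hβbar θ f hf
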